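/- One-step characterization of the Next modality under imperfect information with strongly uniform strategies (correctness of the imperfect-information next search): Let M be an RB-CGS# with indistinguishability relations ∼_a respecting available actions, A a nonempty coalition, b a resource bound, s a state, and φ a formula. Then M, s ⊨_iR ⟨⟨A^b⟩⟩○φ if and only if there is a function assigning to every state s' with s' ∼_a s for some a ∈ A a joint action σ^{s'} ∈ D_A(s') such that: cons(s', (σ^{s'})_a) ≤ b_a componentwise for every a ∈ A; out(s', σ^{s'}) is nonempty; M, t ⊨_iR φ for every t ∈ out(s', σ^{s'}); and for every a ∈ A, (σ^{s'})_a = (σ^{s''})_a whenever s' ∼_a s''. -/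

import Mathlib

/-- A resource-bounded concurrent game structure with a diminishing resource (RB-CGS#). -/
structure RBCGS (Agt S Act Res : Type) where
  /-- available actions for each agent in each state -/
  d : S → Agt → Set Act
  d_ne : ∀ s a, (d s a).Nonempty
  /-- cost function (negative = consumption, positive = production) -/
  cost : S → Act → Res → ℤ
  /-- the distinguished diminishing resource (the "first" resource) -/
  res1 : Res
  /-- every available action consumes at least one unit of the diminishing resource -/
  cost_first : ∀ s (a : Agt) (α : Act), α ∈ d s a → cost s α res1 ≤ -1
  /-- partial transition function on joint actions -/
  tr : S → (Agt → Act) → Option S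

namespace RBCGS

variable {Agt S Act Res : Type}

/-- consumption of resource ρ by action α at state s : `|min(0, c(s,α))|`. -/
def consR (M : RBCGS Agt S Act Res) (s : S) (α : Act) (ρ : Res) : ℕ :=
  (min 0 (M.cost s α ρ)).natAbs

/-- production of resource ρ by action α at state s : `max(0, c(s,α))`. -/
def prodR (M : RBCGS Agt S Act Res) (s : S) (α : Act) (ρ : Res) : ℕ :=
  (max 0 (M.cost s α ρ)).toNat

/-- σ is a (projection of a) joint action for coalition A at state s. -/
def JointAt (M : RBCGS Agt S Act Res) (A : Set Agt) (s : S) (σ : Agt → Act) : Prop :=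
  ∀ a ∈ A, σ a ∈ M.d s a

/-- outcomes of a joint action of coalition A at state s. -/
def outA (M : RBCGS Agt S Act Res) (A : Set Agt) (s : S) (σA : Agt → Act) : Set S :=
  { s' | ∃ σ : Agt → Act, (∀ a, σ a ∈ M.d s a) ∧ (∀ a ∈ A, σ a = σA a) ∧
    M.tr s σ = some s' }

variable [Inhabited S]

/-- F is a strategy for coalition A : on every nonempty history it prescribes a joint
action available to A at the last state of the history. -/
def Strategy (M : RBCGS Agt S Act Res) (A : Set Agt) (F : List S → Agt → Act) : Prop :=
  ∀ l : List S, l ≠ [] → M.JointAt A (l.getD (l.length - 1) default) (F l)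

/-- l is a (finite, nonempty) computation starting at s consistent with strategy F
(the computation `λ[1..k]` is represented 0-based as `l[0..k-1]`). -/
def ConsistentFrom (M : RBCGS Agt S Act Res) (A : Set Agt) (F : List S → Agt → Act)
    (s : S) (l : List S) : Prop :=
  l ≠ [] ∧ l.getD 0 default = s ∧
    ∀ i, i + 1 < l.length →
      l.getD (i + 1) default ∈ M.outA A (l.getD i default) (F (l.take (i + 1)))

/-- `eAvail M F b l i a ρ` is the amount `e_a(λ[i+1])` of resource ρ available to a
after i steps of l under strategy F with initial bound b. -/
def eAvail (M : RBCGS Agt S Act Res) (F : List S → Agt → Act)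
    (b : Agt → Res → ℕ) (l : List S) : ℕ → Agt → Res → ℤ
  | 0 => fun a ρ => (b a ρ : ℤ)
  | i + 1 => fun a ρ =>
      eAvail M F b l i a ρ
        - (M.consR (l.getD i default) (F (l.take (i + 1)) a) ρ : ℤ)
        + (M.prodR (l.getD i default) (F (l.take (i + 1)) a) ρ : ℤ)

/-- l is b-consistent with strategy F for coalition A. -/
def BConsistent (M : RBCGS Agt S Act Res) (A : Set Agt) (F : List S → Agt → Act)
    (b : Agt → Res → ℕ) (l : List S) : Prop :=
  ∀ a ∈ A, ∀ i, i + 1 < l.length → ∀ ρ,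
    (M.consR (l.getD i default) (F (l.take (i + 1)) a) ρ : ℤ) ≤ M.eAvail F b l i a ρ

/-- l is a b-maximal computation from s consistent with F. -/
def BMaximal (M : RBCGS Agt S Act Res) (A : Set Agt) (F : List S → Agt → Act)
    (b : Agt → Res → ℕ) (s : S) (l : List S) : Prop :=
  M.ConsistentFrom A F s l ∧ M.BConsistent A F b l ∧
    ¬ ∃ l' : List S, l <+: l' ∧ l.length < l'.length ∧
        M.ConsistentFrom A F s l' ∧ M.BConsistent A F b l'

/-- `out(s, F_A, b)` : the set of b-maximal computations from s consistent with F. -/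
def outSet (M : RBCGS Agt S Act Res) (A : Set Agt) (F : List S → Agt → Act)
    (b : Agt → Res → ℕ) (s : S) : Set (List S) :=
  { l | M.BMaximal A F b s l }

end RBCGS

/-- Formulas of RB±ATL#. -/
inductive RBForm (Agt Res P : Type) : Type 1 where
  | prop : P → RBForm Agt Res P
  | neg : RBForm Agt Res P → RBForm Agt Res P
  | or : RBForm Agt Res P → RBForm Agt Res P → RBForm Agt Res P
  | nxt : Set Agt → (Agt → Res → ℕ) → RBForm Agt Res P → RBForm Agt Res P
  | untl : Set Agt → (Agt → Res → ℕ) → RBForm Agt Res P → RBForm Agt Res P → RBForm Agt Res P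
  | rls : Set Agt → (Agt → Res → ℕ) → RBForm Agt Res P → RBForm Agt Res P → RBForm Agt Res P

namespace RBCGS

variable {Agt S Act Res P : Type} [Inhabited S]

/-- Truth of an RB±ATL# formula at a state of an RB-CGS#, given a valuation V. -/
def Sat (M : RBCGS Agt S Act Res) (V : P → S → Prop) :
    RBForm Agt Res P → S → Prop
  | .prop p, s => V p s
  | .neg φ, s => ¬ Sat M V φ s
  | .or φ ψ, s => Sat M V φ s ∨ Sat M V ψ s
  | .nxt A b φ, s => ∃ F, M.Strategy A F ∧
      ∀ l ∈ M.outSet A F b s, 2 ≤ l.length ∧ Sat M V φ (l.getD 1 default)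
  | .untl A b φ ψ, s => ∃ F, M.Strategy A F ∧
      ∀ l ∈ M.outSet A F b s, ∃ i < l.length,
        Sat M V ψ (l.getD i default) ∧ ∀ j < i, Sat M V φ (l.getD j default)
  | .rls A b φ ψ, s => ∃ F, M.Strategy A F ∧
      ∀ l ∈ M.outSet A F b s,
        (∃ i < l.length, Sat M V φ (l.getD i default) ∧
          ∀ j ≤ i, Sat M V ψ (l.getD j default)) ∨
        (∀ j < l.length, Sat M V ψ (l.getD j default))

end RBCGS

/-- All coalitions occurring in the formula are nonempty. -/
def RBForm.goodCoal {Agt Res P : Type} : RBForm Agt Res P → Prop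
  | .prop _ => True
  | .neg φ => φ.goodCoal
  | .or φ ψ => φ.goodCoal ∧ ψ.goodCoal
  | .nxt A _ φ => A.Nonempty ∧ φ.goodCoal
  | .untl A _ φ ψ => A.Nonempty ∧ φ.goodCoal ∧ ψ.goodCoal
  | .rls A _ φ ψ => A.Nonempty ∧ φ.goodCoal ∧ ψ.goodCoal

namespace RBCGS

variable {Agt S Act Res P : Type} [Inhabited S]

/-- Componentwise lifting of the indistinguishability relation to equal-length state
sequences. -/
def ListSim (sim : Agt → S → S → Prop) (a : Agt) (l l' : List S) : Prop :=
  l.length = l'.length ∧ ∀ i < l.length, sim a (l.getD i default) (l'.getD i default)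

/-- A strategy for coalition A is uniform: indistinguishable histories get the same
action for each agent of A. -/
def Uniform (A : Set Agt) (sim : Agt → S → S → Prop) (F : List S → Agt → Act) : Prop :=
  ∀ a ∈ A, ∀ l l' : List S, l ≠ [] → l' ≠ [] → ListSim sim a l l' → F l a = F l' a

/-- Truth of an RB±ATL# formula under imperfect information and perfect recall with
strongly uniform strategies (`⊨_iR`). -/
def SatIR (M : RBCGS Agt S Act Res) (V : P → S → Prop) (sim : Agt → S → S → Prop) :
    RBForm Agt Res P → S → Prop
  | .prop p, s => V p s
  | .neg φ, s => ¬ SatIR M V sim φ s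
  | .or φ ψ, s => SatIR M V sim φ s ∨ SatIR M V sim ψ s
  | .nxt A b φ, s => ∃ F, M.Strategy A F ∧ Uniform A sim F ∧
      ∀ s' : S, (∃ a ∈ A, sim a s' s) →
        ∀ l ∈ M.outSet A F b s', 2 ≤ l.length ∧ SatIR M V sim φ (l.getD 1 default)
  | .untl A b φ ψ, s => ∃ F, M.Strategy A F ∧ Uniform A sim F ∧
      ∀ s' : S, (∃ a ∈ A, sim a s' s) →
        ∀ l ∈ M.outSet A F b s', ∃ i < l.length,
          SatIR M V sim ψ (l.getD i default) ∧ ∀ j < i, SatIR M V sim φ (l.getD j default)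
  | .rls A b φ ψ, s => ∃ F, M.Strategy A F ∧ Uniform A sim F ∧
      ∀ s' : S, (∃ a ∈ A, sim a s' s) →
        ∀ l ∈ M.outSet A F b s',
          (∃ i < l.length, SatIR M V sim φ (l.getD i default) ∧
            ∀ j ≤ i, SatIR M V sim ψ (l.getD j default)) ∨
          (∀ j < l.length, SatIR M V sim ψ (l.getD j default))

end RBCGS

/-!
A strategy witnessing `⟨⟨A^b⟩⟩○φ` only matters on the one-state histories `[s']` with `s'`
indistinguishable from `s`: the `b`-maximal computations from `s'` all have length at least two
exactly when the first action is affordable and has an outcome, and their second states then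
range over all outcomes of that action. The latter needs every `b`-consistent computation to
extend to a `b`-maximal one, which holds because the diminishing resource of any agent of the
coalition bounds the length of `b`-consistent computations. Conversely, a uniform choice of
actions on the indistinguishability class of `s` extends to all states, since indistinguishable
states offer the same actions, and so yields a uniform memoryless strategy.
-/

namespace RBCGS

variable {Agt S Act Res : Type} {M : RBCGS Agt S Act Res} {A : Set Agt}

lemma one_le_consR_res1 {s : S} {a : Agt} {α : Act} (h : α ∈ M.d s a) :
    1 ≤ M.consR s α M.res1 := by
  have := M.cost_first s a α h
  unfold consR
  omega

lemma prodR_res1_eq_zero {s : S} {a : Agt} {α : Act} (h : α ∈ M.d s a) :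
    M.prodR s α M.res1 = 0 := by
  have := M.cost_first s a α h
  unfold prodR
  omega

variable (M) in
def Affordable (A : Set Agt) (b : Agt → Res → ℕ) (s : S) (σ : Agt → Act) : Prop :=
  ∀ a ∈ A, ∀ ρ, M.consR s (σ a) ρ ≤ b a ρ

lemma affordable_congr {b : Agt → Res → ℕ} {s : S} {σ σ' : Agt → Act}
    (h : ∀ a ∈ A, σ a = σ' a) : M.Affordable A b s σ ↔ M.Affordable A b s σ' := by
  unfold Affordable
  exact forall₂_congr fun a ha => by rw [h a ha]

lemma outA_congr {s : S} {σ σ' : Agt → Act} (h : ∀ a ∈ A, σ a = σ' a) :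
    M.outA A s σ = M.outA A s σ' := by
  ext t
  exact exists_congr fun τ => and_congr_right' <| and_congr_left' <|
    forall₂_congr fun a ha => by rw [h a ha]

variable (M) in
lemma exists_uniform_extension {sim : Agt → S → S → Prop} (hsim : ∀ a, Equivalence (sim a))
    (hsimd : ∀ a s s', sim a s s' → M.d s a = M.d s' a) {K : Set S} {σ : S → Agt → Act}
    (havail : ∀ u ∈ K, ∀ a ∈ A, σ u a ∈ M.d u a)
    (hunif : ∀ a ∈ A, ∀ u u', u ∈ K → u' ∈ K → sim a u u' → σ u a = σ u' a) :
    ∃ τ : S → Agt → Act, (∀ t, ∀ a ∈ A, τ t a ∈ M.d t a) ∧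
      (∀ a ∈ A, ∀ t t', sim a t t' → τ t a = τ t' a) ∧ ∀ u ∈ K, ∀ a ∈ A, τ u a = σ u a := by
  classical
  let τ : S → Agt → Act := fun t a =>
    if h : ∃ u ∈ K, sim a t u then σ h.choose a else (M.d_ne t a).some
  have hclass {a : Agt} {t t' : S} (htt' : sim a t t') :
      (∃ u ∈ K, sim a t u) ↔ ∃ u ∈ K, sim a t' u :=
    exists_congr fun u => and_congr_right fun _ =>
      ⟨(hsim a).trans ((hsim a).symm htt'), (hsim a).trans htt'⟩
  refine ⟨τ, fun t a ha => ?_, fun a ha t t' htt' => ?_, fun u hu a ha => ?_⟩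
  · by_cases h : ∃ u ∈ K, sim a t u
    · simp only [τ, dif_pos h, hsimd a t _ h.choose_spec.2]
      exact havail _ h.choose_spec.1 a ha
    · simp only [τ, dif_neg h]
      exact (M.d_ne t a).some_mem
  · by_cases h : ∃ u ∈ K, sim a t u
    · have h' := (hclass htt').1 h
      simp only [τ, dif_pos h, dif_pos h']
      exact hunif a ha _ _ h.choose_spec.1 h'.choose_spec.1 <|
        (hsim a).trans ((hsim a).symm h.choose_spec.2) ((hsim a).trans htt' h'.choose_spec.2)
    · have h' := mt (hclass htt').2 h
      simp only [τ, dif_neg h, dif_neg h']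
      congr 1
      exact hsimd a t t' htt'
  · have h : ∃ u' ∈ K, sim a u u' := ⟨u, hu, (hsim a).refl u⟩
    simp only [τ, dif_pos h]
    exact hunif a ha _ _ h.choose_spec.1 hu ((hsim a).symm h.choose_spec.2)

variable [Inhabited S] {F : List S → Agt → Act} {b : Agt → Res → ℕ}

lemma getD_take_succ_length_sub_one (l : List S) {i : ℕ} (h : i < l.length) :
    (l.take (i + 1)).getD ((l.take (i + 1)).length - 1) default = l.getD i default := by
  have hlen : (l.take (i + 1)).length = i + 1 := by simp; omega
  rw [hlen]
  simp [List.getD_eq_getElem?_getD]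

lemma Strategy.mem_d (hF : M.Strategy A F) {a : Agt} (ha : a ∈ A) {l : List S} {i : ℕ}
    (h : i < l.length) : F (l.take (i + 1)) a ∈ M.d (l.getD i default) a := by
  have hne : l.take (i + 1) ≠ [] := List.ne_nil_of_length_pos (by simp; omega)
  simpa only [getD_take_succ_length_sub_one l h] using hF _ hne a ha

lemma eAvail_res1_le (hF : M.Strategy A F) {a : Agt} (ha : a ∈ A) (l : List S) :
    ∀ i ≤ l.length, M.eAvail F b l i a M.res1 ≤ (b a M.res1 : ℤ) - i
  | 0, _ => by simp [eAvail]
  | i + 1, h => by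
    have hmem := hF.mem_d ha (show i < l.length by omega)
    have := one_le_consR_res1 hmem
    have := prodR_res1_eq_zero hmem
    have := eAvail_res1_le hF ha l i (by omega)
    simp only [eAvail]
    push_cast
    omega

lemma BConsistent.length_le {l : List S} (hb : M.BConsistent A F b l) (hF : M.Strategy A F)
    {a : Agt} (ha : a ∈ A) : l.length ≤ b a M.res1 + 1 := by
  by_contra! h
  have hcons := hb a ha (b a M.res1) (by omega) M.res1
  have havail := eAvail_res1_le (b := b) hF ha l (b a M.res1) (by omega)
  have := one_le_consR_res1 (hF.mem_d ha (show b a M.res1 < l.length by omega))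
  omega

lemma exists_bMaximal_extension (hF : M.Strategy A F) {a : Agt} (ha : a ∈ A) {s : S}
    (l : List S) (hc : M.ConsistentFrom A F s l) (hb : M.BConsistent A F b l) :
    ∃ l', l <+: l' ∧ M.BMaximal A F b s l' := by
  by_cases hext : ∃ l', l <+: l' ∧ l.length < l'.length ∧
      M.ConsistentFrom A F s l' ∧ M.BConsistent A F b l'
  · obtain ⟨l', hpre, hlt, hc', hb'⟩ := hext
    have := hb'.length_le hF ha
    obtain ⟨l'', hpre', hmax⟩ := exists_bMaximal_extension hF ha l' hc' hb'
    exact ⟨l'', hpre.trans hpre', hmax⟩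
  · exact ⟨l, List.prefix_refl l, hc, hb, hext⟩
termination_by b a M.res1 + 1 - l.length

lemma consistentFrom_singleton {s : S} : M.ConsistentFrom A F s [s] := by
  simp [ConsistentFrom]

lemma bConsistent_singleton {s : S} : M.BConsistent A F b [s] := by
  simp [BConsistent]

lemma consistentFrom_pair {s t : S} :
    M.ConsistentFrom A F s [s, t] ↔ t ∈ M.outA A s (F [s]) := by
  simp [ConsistentFrom]

lemma bConsistent_pair {s t : S} :
    M.BConsistent A F b [s, t] ↔ M.Affordable A b s (F [s]) := by
  simp [BConsistent, Affordable, eAvail]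

lemma ConsistentFrom.exists_eq_cons {s : S} {l : List S} (hc : M.ConsistentFrom A F s l) :
    ∃ tl, l = s :: tl := by
  obtain ⟨hne, hhead, -⟩ := hc
  obtain ⟨x, tl, rfl⟩ := List.exists_cons_of_ne_nil hne
  exact ⟨tl, by simpa using hhead⟩

lemma ConsistentFrom.getD_one_mem_outA {s : S} {l : List S} (hc : M.ConsistentFrom A F s l)
    (hl : 2 ≤ l.length) : l.getD 1 default ∈ M.outA A s (F [s]) := by
  obtain ⟨tl, rfl⟩ := hc.exists_eq_cons
  simpa using hc.2.2 0 hl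

lemma ConsistentFrom.affordable {s : S} {l : List S} (hc : M.ConsistentFrom A F s l)
    (hb : M.BConsistent A F b l) (hl : 2 ≤ l.length) : M.Affordable A b s (F [s]) := by
  obtain ⟨tl, rfl⟩ := hc.exists_eq_cons
  intro a ha ρ
  simpa [eAvail] using hb a ha 0 hl ρ

lemma singleton_mem_outSet_iff {s : S} : [s] ∈ M.outSet A F b s ↔
    ¬ (M.Affordable A b s (F [s]) ∧ (M.outA A s (F [s])).Nonempty) := by
  constructor
  · rintro ⟨-, -, hmax⟩ ⟨haff, t, ht⟩
    exact hmax ⟨[s, t], ⟨[t], rfl⟩, by simp, consistentFrom_pair.2 ht, bConsistent_pair.2 haff⟩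
  · intro hstuck
    refine ⟨consistentFrom_singleton, bConsistent_singleton, ?_⟩
    rintro ⟨l, -, hlen, hc, hb⟩
    exact hstuck ⟨hc.affordable hb hlen, _, hc.getD_one_mem_outA hlen⟩

lemma two_le_length_of_mem_outSet {s : S} {l : List S} (hl : l ∈ M.outSet A F b s)
    (haff : M.Affordable A b s (F [s])) (hne : (M.outA A s (F [s])).Nonempty) :
    2 ≤ l.length := by
  obtain ⟨tl, rfl⟩ := hl.1.exists_eq_cons
  rcases tl with _ | ⟨t, tl⟩
  · exact (singleton_mem_outSet_iff.1 hl ⟨haff, hne⟩).elim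
  · simp

lemma exists_mem_outSet_getD_one (hF : M.Strategy A F) {a : Agt} (ha : a ∈ A) {s t : S}
    (haff : M.Affordable A b s (F [s])) (ht : t ∈ M.outA A s (F [s])) :
    ∃ l ∈ M.outSet A F b s, l.getD 1 default = t := by
  obtain ⟨l, ⟨r, rfl⟩, hmax⟩ :=
    exists_bMaximal_extension hF ha [s, t] (consistentFrom_pair.2 ht) (bConsistent_pair.2 haff)
  exact ⟨_, hmax, rfl⟩

lemma listSim_singleton {sim : Agt → S → S → Prop} {a : Agt} {s t : S} (h : sim a s t) :
    ListSim sim a [s] [t] :=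
  ⟨rfl, by simpa using h⟩

lemma uniform_of_last {sim : Agt → S → S → Prop} {τ : S → Agt → Act}
    (hτ : ∀ a ∈ A, ∀ t t', sim a t t' → τ t a = τ t' a) :
    Uniform A sim (fun l => τ (l.getD (l.length - 1) default)) := by
  rintro a ha l l' hl - ⟨hlen, hsims⟩
  have hlast := hsims (l.length - 1) <| by
    simpa [Nat.sub_lt_iff_lt_add, List.length_pos_iff] using hl
  simp only
  rw [← hlen]
  exact hτ a ha _ _ hlast

end RBCGS

/-- One-step characterization of the Next modality under imperfect
information with strongly uniform strategies: ⟨⟨A^b⟩⟩○φ holds at s iff one can assign to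
each state s' indistinguishable from s (for some a ∈ A) an affordable joint action of A
available at s', with nonempty outcome set all of whose members satisfy φ, such that the
assignment is uniform (agents choose the same action at indistinguishable states). -/
theorem next_iR_characterization {Agt S Act Res P : Type} [Inhabited S]
    (M : RBCGS Agt S Act Res) (V : P → S → Prop)
    (sim : Agt → S → S → Prop) (hsim : ∀ a, Equivalence (sim a))
    (hsimd : ∀ a s s', sim a s s' → M.d s a = M.d s' a)
    (A : Set Agt) (hA : A.Nonempty) (b : Agt → Res → ℕ) (s : S)
    (φ : RBForm Agt Res P) :
    M.SatIR V sim (.nxt A b φ) s ↔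
      ∃ σ : S → Agt → Act,
        (∀ s' : S, (∃ a ∈ A, sim a s' s) →
          (∀ a ∈ A, σ s' a ∈ M.d s' a) ∧
          (∀ a ∈ A, ∀ ρ : Res, M.consR s' (σ s' a) ρ ≤ b a ρ) ∧
          (M.outA A s' (σ s')).Nonempty ∧
          ∀ t ∈ M.outA A s' (σ s'), M.SatIR V sim φ t) ∧
        (∀ a ∈ A, ∀ s' s'' : S, (∃ a' ∈ A, sim a' s' s) → (∃ a' ∈ A, sim a' s'' s) →
          sim a s' s'' → σ s' a = σ s'' a) := by
  rw [RBCGS.SatIR]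
  constructor
  · rintro ⟨F, hF, hU, hout⟩
    obtain ⟨a₀, ha₀⟩ := hA
    refine ⟨fun s' => F [s'], fun s' hs' => ?_,
      fun a ha s' s'' _ _ hss => hU a ha _ _ (by simp) (by simp) (RBCGS.listSim_singleton hss)⟩
    have hprog : M.Affordable A b s' (F [s']) ∧ (M.outA A s' (F [s'])).Nonempty := by
      by_contra hstuck
      simpa using (hout s' hs' [s'] (RBCGS.singleton_mem_outSet_iff.2 hstuck)).1
    refine ⟨hF [s'] (by simp), hprog.1, hprog.2, fun t ht => ?_⟩
    obtain ⟨l, hl, rfl⟩ := RBCGS.exists_mem_outSet_getD_one hF ha₀ hprog.1 ht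
    exact (hout s' hs' l hl).2
  · rintro ⟨σ, hσ, hσu⟩
    obtain ⟨τ, hτd, hτu, hτσ⟩ := M.exists_uniform_extension hsim hsimd
      (K := {s' | ∃ a ∈ A, sim a s' s}) (fun u hu => (hσ u hu).1) hσu
    refine ⟨fun l => τ (l.getD (l.length - 1) default), fun l _ => hτd _, RBCGS.uniform_of_last hτu,
      fun s' hs' l hl => ?_⟩
    obtain ⟨-, haff, hne, hsat⟩ := hσ s' hs'
    have hout : M.outA A s' (τ s') = M.outA A s' (σ s') := RBCGS.outA_congr (hτσ s' hs')
    have hlen := RBCGS.two_le_length_of_mem_outSet hl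
      ((RBCGS.affordable_congr (hτσ s' hs')).2 haff) (hout ▸ hne)
    exact ⟨hlen, hsat _ (hout ▸ hl.1.getD_one_mem_outA hlen)⟩
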